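/- arXiv:1706.08299 — 3 statements merged into one kernel-verified Lean document; each statement's English description precedes it below -/
import Mathlib

section
/- Fix 1 ≤ r ≤ n and set d = n − r. Let A ∈ ℚ[u_1,…,u_r] be homogeneous of degree d, push-invariant, and mantar-invariant (mantar(A) = A), and suppose B = swap(A) satisfies B(v_1,…,v_r) = (−1)^{r−1} B(v_r,…,v_1). Then neg(A) = A, i.e. A(−u_1,…,−u_r) = A(u_1,…,u_r); in particular, if d is odd then A = 0. -/
/-!
Mantar-invariance of `A` and the reversal symmetry of `B = swap A` together say that `A` takes
the same value after the two substitutions `rev ∘ swap` and `swap ∘ rev`; the first is the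
difference map `u_j ↦ u_j − u_{j−1}`. Undoing it by partial sums shows that `A` is invariant under
`u_j ↦ −u_{j+1}`, `u_r ↦ u_1 + ⋯ + u_r`, which is `−push⁻¹`. Push-invariance then gives
`A(−u) = A(u)`, while for odd degree homogeneity gives `A(−u) = −A(u)`, so `A = 0`.
-/

noncomputable section

open MvPolynomial

/-- polynomials in `r` commuting variables over `ℚ`. -/
abbrev MP (r : ℕ) := MvPolynomial (Fin r) ℚ

/-- the variable substitution defining the push-operator:
`(push A)(u_1,…,u_r) = A(−u_1−⋯−u_r, u_1,…,u_{r−1})`. -/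
def pushSub (r : ℕ) : Fin r → MP r := fun j =>
  if (j : ℕ) = 0 then -(∑ k : Fin r, X k)
  else X ⟨(j : ℕ) - 1, lt_of_le_of_lt (Nat.sub_le _ _) j.isLt⟩

/-- the variable substitution defining the swap:
`(swap A)(v_1,…,v_r) = A(v_r, v_{r−1}−v_r, …, v_1−v_2)`. -/
def swapSub (r : ℕ) : Fin r → MP r := fun j =>
  if h : (j : ℕ) = 0 then X ⟨r - 1, Nat.sub_lt j.pos one_pos⟩
  else X ⟨r - 1 - (j : ℕ), lt_of_le_of_lt (Nat.sub_le _ _) (Nat.sub_lt j.pos one_pos)⟩ -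
    X ⟨r - (j : ℕ), Nat.sub_lt j.pos (Nat.pos_of_ne_zero h)⟩

/-- `mantar(A)(u_1,…,u_r) = (−1)^{r−1} A(u_r,…,u_1)`. -/
def mantarP (r : ℕ) (A : MP r) : MP r :=
  ((-1 : MP r)) ^ (r - 1) * MvPolynomial.rename Fin.rev A

/-- `neg(A)(u_1,…,u_r) = A(−u_1,…,−u_r)`. -/
def negP (r : ℕ) (A : MP r) : MP r := MvPolynomial.aeval (fun j : Fin r => -X j) A

namespace MvPolynomial

theorem IsHomogeneous.aeval_C_mul_X {σ R : Type*} [CommSemiring R] {φ : MvPolynomial σ R}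
    {n : ℕ} (hφ : φ.IsHomogeneous n) (c : R) :
    MvPolynomial.aeval (fun i => C c * X i) φ = C (c ^ n) * φ := by
  conv_lhs => rw [φ.as_sum]
  conv_rhs => rw [φ.as_sum, Finset.mul_sum]
  rw [map_sum]
  refine Finset.sum_congr rfl fun d hd => ?_
  have hdeg : ∑ i ∈ d.support, d i = n := by
    simpa [Finsupp.weight_apply, Finsupp.sum] using hφ (mem_support_iff.mp hd)
  rw [aeval_monomial, monomial_eq, Finsupp.prod, Finsupp.prod]
  simp only [mul_pow, Finset.prod_mul_distrib, Finset.prod_pow_eq_pow_sum, hdeg, algebraMap_eq,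
    C_pow]
  ring

end MvPolynomial

theorem eq_zero_of_negP_eq_self_of_odd {r d : ℕ} {A : MP r} (hA : A.IsHomogeneous d)
    (hd : Odd d) (hneg : negP r A = A) : A = 0 := by
  have hscale : negP r A = -A := by
    simpa [negP, hd.neg_one_pow] using hA.aeval_C_mul_X (-1)
  exact CharZero.neg_eq_self_iff.mp (hneg ▸ hscale).symm

section Substitutions

variable {m : ℕ}

lemma pushSub_zero : pushSub (m + 1) 0 = -∑ k, X k := rfl

lemma pushSub_succ (i : Fin m) : pushSub (m + 1) i.succ = X i.castSucc := rfl

lemma swapSub_zero : swapSub (m + 1) 0 = X (Fin.last m) := rfl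

lemma swapSub_succ (i : Fin m) :
    swapSub (m + 1) i.succ = X i.rev.castSucc - X i.rev.succ := by
  simp only [swapSub, Fin.val_succ, Nat.add_one_ne_zero, dite_false]
  congr 2
  ext
  simp only [Fin.val_rev, Fin.val_succ]
  omega

def diffSub (m : ℕ) : Fin (m + 1) → MP (m + 1) :=
  Fin.cases (X 0) fun i => X i.succ - X i.castSucc

def sumSub (m : ℕ) (j : Fin (m + 1)) : MP (m + 1) :=
  ∑ k ∈ Finset.Iic j, X k

def negPushInvSub (m : ℕ) : Fin (m + 1) → MP (m + 1) :=
  Fin.lastCases (∑ k, X k) fun i => -X i.succ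

lemma swapSub_eq_rename_rev_diffSub :
    swapSub (m + 1) = fun j => rename Fin.rev (diffSub m j) := by
  ext1 j
  cases j using Fin.cases with
  | zero => simp [swapSub_zero, diffSub]
  | succ i => simp [swapSub_succ, diffSub, Fin.rev_succ, Fin.rev_castSucc]

lemma sumSub_zero : sumSub m 0 = X 0 := by
  rw [sumSub, ← bot_eq_zero, Finset.Iic_bot, Finset.sum_singleton]

lemma sumSub_succ (i : Fin m) : sumSub m i.succ = sumSub m i.castSucc + X i.succ := by
  have hIic : Finset.Iic i.succ = insert i.succ (Finset.Iic i.castSucc) := by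
    ext k
    rw [Finset.mem_insert, Finset.mem_Iic, Finset.mem_Iic, Fin.le_castSucc_iff]
    exact le_iff_eq_or_lt
  rw [sumSub, sumSub, hIic, Finset.sum_insert (by simp)]
  exact add_comm _ _

lemma sumSub_last : sumSub m (Fin.last m) = ∑ k, X k := by
  rw [sumSub, ← Fin.top_eq_last, Finset.Iic_top]

lemma aeval_sumSub_diffSub : (fun j => aeval (sumSub m) (diffSub m j)) = X := by
  ext1 j
  cases j using Fin.cases with
  | zero => simp [diffSub, sumSub_zero]
  | succ i => simp [diffSub, sumSub_succ]

lemma aeval_sumSub_swapSub_rev :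
    (fun j => aeval (sumSub m) (swapSub (m + 1) j.rev)) = negPushInvSub m := by
  ext1 j
  cases j using Fin.lastCases with
  | last => simp [negPushInvSub, swapSub_zero, sumSub_last]
  | cast i => simp [negPushInvSub, Fin.rev_castSucc, swapSub_succ, sumSub_succ]

lemma aeval_pushSub_negPushInvSub :
    (fun j => aeval (pushSub (m + 1)) (negPushInvSub m j)) = fun j => -X j := by
  ext1 j
  cases j using Fin.lastCases with
  | last =>
    simp only [negPushInvSub, Fin.lastCases_last, map_sum, aeval_X]
    rw [Fin.sum_univ_succ, pushSub_zero, Fin.sum_univ_castSucc (X : Fin (m + 1) → MP (m + 1))]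
    simp only [pushSub_succ]
    ring
  | cast i => simp [negPushInvSub, pushSub_succ]

lemma aeval_diffSub_eq_aeval_swapSub_rev {A : MP (m + 1)} (hmantar : mantarP (m + 1) A = A)
    (hB : mantarP (m + 1) (aeval (swapSub (m + 1)) A) = aeval (swapSub (m + 1)) A) :
    aeval (diffSub m) A = aeval (fun j => swapSub (m + 1) j.rev) A := by
  rw [mantarP, Nat.add_sub_cancel] at hmantar hB
  have hrev : rename Fin.rev (aeval (swapSub (m + 1)) A) = aeval (diffSub m) A := by
    simp only [swapSub_eq_rename_rev_diffSub, comp_aeval_apply, rename_rename,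
      Fin.rev_involutive.comp_self, rename_id_apply]
  have hswap :
      aeval (swapSub (m + 1)) A = (-1) ^ m * aeval (fun j => swapSub (m + 1) j.rev) A := by
    conv_lhs => rw [← hmantar]
    rw [map_mul, aeval_rename, map_pow, map_neg, map_one]
    rfl
  rw [hrev, hswap] at hB
  exact mul_left_cancel₀ (pow_ne_zero _ (neg_ne_zero.mpr one_ne_zero)) hB

end Substitutions

theorem neg_invariance_and_odd_vanishing_general (n r : ℕ) (hr : 1 ≤ r) (A : MP r)
    (hhom : A.IsHomogeneous (n - r))
    (hpush : MvPolynomial.aeval (pushSub r) A = A)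
    (hmantar : mantarP r A = A)
    (hB : mantarP r (MvPolynomial.aeval (swapSub r) A) = MvPolynomial.aeval (swapSub r) A) :
    negP r A = A ∧ (Odd (n - r) → A = 0) := by
  obtain ⟨m, rfl⟩ : ∃ m, r = m + 1 := ⟨r - 1, by omega⟩
  have hinv : aeval (negPushInvSub m) A = A := by
    calc aeval (negPushInvSub m) A
        = aeval (sumSub m) (aeval (fun j => swapSub (m + 1) j.rev) A) := by
          rw [comp_aeval_apply, aeval_sumSub_swapSub_rev]
      _ = aeval (sumSub m) (aeval (diffSub m) A) := by
          rw [aeval_diffSub_eq_aeval_swapSub_rev hmantar hB]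
      _ = A := by rw [comp_aeval_apply, aeval_sumSub_diffSub, aeval_X_left_apply]
  have hneg : negP (m + 1) A = A := by
    calc negP (m + 1) A = aeval (pushSub (m + 1)) (aeval (negPushInvSub m) A) := by
          rw [comp_aeval_apply, aeval_pushSub_negPushInvSub, negP]
      _ = A := by rw [hinv, hpush]
  exact ⟨hneg, fun hodd => eq_zero_of_negP_eq_self_of_odd hhom hodd hneg⟩

/-- Lemma 14 of the paper.  Fix `1 ≤ r ≤ n`, `d = n − r`.  If
`A ∈ ℚ[u_1,…,u_r]` is homogeneous of degree `d`, push-invariant and mantar-invariant, and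
`B = swap(A)` satisfies `B(v_1,…,v_r) = (−1)^{r−1} B(v_r,…,v_1)`, then `neg(A) = A`; in
particular if `d` is odd then `A = 0`. -/
theorem neg_invariance_and_odd_vanishing (n r : ℕ) (hr : 1 ≤ r) (hrn : r ≤ n) (A : MP r)
    (hhom : A.IsHomogeneous (n - r))
    (hpush : MvPolynomial.aeval (pushSub r) A = A)
    (hmantar : mantarP r A = A)
    (hB : mantarP r (MvPolynomial.aeval (swapSub r) A) = MvPolynomial.aeval (swapSub r) A) :
    negP r A = A ∧ (Odd (n - r) → A = 0) :=
  neg_invariance_and_odd_vanishing_general n r hr A hhom hpush hmantar hB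
end
end

section
/- Let b, b′ ∈ lie_C be push-invariant, with (unique) partners a, a′ ∈ lie_C, i.e. the derivations D_{b,a} and D_{b′,a′} annihilate [x,y]. Then the commutator [D_{b,a}, D_{b′,a′}] also annihilates [x,y] and equals D_{b″,a″} with b″ = D_{b,a}(b′) − D_{b′,a′}(b) and a″ = D_{b,a}(a′) − D_{b′,a′}(a); in particular ⟨b,b′⟩ := D_{b,a}(b′) − D_{b′,a′}(b) is again a push-invariant element of lie_C, with partner a″. Hence the push-invariant elements of lie_C form a Lie algebra under the bracket ⟨·,·⟩, isomorphic via b ↦ D_{b,a} to the Lie algebra oder_2 of derivations of lie_2 annihilating [x,y] (and whose values on x, y have no linear term in x). -/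
noncomputable section

attribute [instance] LieRing.ofAssociativeRing

abbrev Ass2 : Type := MonoidAlgebra ℚ (FreeMonoid (Fin 2))

def mono (w : List (Fin 2)) : Ass2 := MonoidAlgebra.single (FreeMonoid.ofList w) 1

def Xg : Ass2 := mono [0]
def Yg : Ass2 := mono [1]

def coeffW (f : Ass2) (w : List (Fin 2)) : ℚ :=
  f.coeff (FreeMonoid.ofList w)

def suppW (f : Ass2) : Finset (FreeMonoid (Fin 2)) :=
  f.coeff.support

def pushWord (w : List (Fin 2)) : List (Fin 2) :=
  if (1 : Fin 2) ∈ w then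
    (w.reverse.takeWhile (· ≠ 1)).reverse ++ [1] ++ ((w.reverse.dropWhile (· ≠ 1)).tail).reverse
  else w

def pushA (f : Ass2) : Ass2 :=
  MonoidAlgebra.ofCoeff (Finsupp.mapDomain (fun w => FreeMonoid.ofList (pushWord (FreeMonoid.toList w)))
    f.coeff)

def depthPart (r : ℕ) (f : Ass2) : Ass2 :=
  MonoidAlgebra.ofCoeff (Finsupp.filter (fun w => (FreeMonoid.toList w).count 1 = r) f.coeff)

def homogW (n : ℕ) (f : Ass2) : Prop := ∀ w ∈ suppW f, (FreeMonoid.toList w).length = n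

def lie2 : LieSubalgebra ℚ Ass2 := LieSubalgebra.lieSpan ℚ Ass2 {Xg, Yg}

def Cgen : ℕ → Ass2
  | 0 => Yg
  | i + 1 => ⁅Xg, Cgen i⁆

def lieC : LieSubalgebra ℚ Ass2 := LieSubalgebra.lieSpan ℚ Ass2 (Set.range Cgen)

/-- `rY f` is `f_y` : the part of `f` consisting of words ending in `y`, with that `y` removed. -/
def rY (f : Ass2) : Ass2 :=
  MonoidAlgebra.ofCoeff (Finsupp.comapDomain (fun w => w * FreeMonoid.of 1) f.coeff
    (Set.injOn_of_injective (mul_left_injective (FreeMonoid.of 1))))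

def rX (f : Ass2) : Ass2 :=
  MonoidAlgebra.ofCoeff (Finsupp.comapDomain (fun w => w * FreeMonoid.of 0) f.coeff
    (Set.injOn_of_injective (mul_left_injective (FreeMonoid.of 0))))

/-- `lY f` is `f^y`. -/
def lY (f : Ass2) : Ass2 :=
  MonoidAlgebra.ofCoeff (Finsupp.comapDomain (fun w => FreeMonoid.of 1 * w) f.coeff
    (Set.injOn_of_injective (mul_right_injective (FreeMonoid.of 1))))

def lX (f : Ass2) : Ass2 :=
  MonoidAlgebra.ofCoeff (Finsupp.comapDomain (fun w => FreeMonoid.of 0 * w) f.coeff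
    (Set.injOn_of_injective (mul_right_injective (FreeMonoid.of 0))))

/-- sum of all monomials of weight `n` and depth `r` -/
def allMon (n r : ℕ) : Ass2 :=
  ∑ g ∈ Finset.univ.filter (fun g : Fin n → Fin 2 => (List.ofFn g).count 1 = r),
    mono (List.ofFn g)

def PushNeutral (p : Ass2) : Prop :=
  ∀ r : ℕ, 1 ≤ r → ∑ i ∈ Finset.range (r + 1), pushA^[i] (depthPart r p) = 0

def CircNeutral (b : Ass2) : Prop :=
  ∀ r : ℕ, 1 < r → ∑ i ∈ Finset.range (r + 1), pushA^[i] (depthPart r (lY b)) = 0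

def PushConstant (p : Ass2) (n : ℕ) (c : ℚ) : Prop :=
  coeffW p (List.replicate n 1) = 0 ∧
    ∀ r : ℕ, 1 < r → r < n →
      ∑ i ∈ Finset.range (r + 1), pushA^[i] (depthPart r p) = c • allMon n r

def cycSub : Submodule ℚ Ass2 :=
  Submodule.span ℚ {p : Ass2 | ∃ (w : List (Fin 2)) (k : ℕ), p = mono w - mono (w.rotate k)}

abbrev Tr2 := Ass2 ⧸ cycSub

def trQ : Ass2 →ₗ[ℚ] Tr2 := cycSub.mkQ

def derFun (vx vy : Ass2) : List (Fin 2) → Ass2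
  | [] => 0
  | a :: w => (if a = 0 then vx else vy) * mono w + mono [a] * derFun vx vy w

/-- the derivation of `Ass2` with `x ↦ vx`, `y ↦ vy`, applied to `f`. -/
def der (vx vy : Ass2) (f : Ass2) : Ass2 :=
  Finsupp.sum f.coeff (fun w c => c • derFun vx vy (FreeMonoid.toList w))

/-- the tangential derivation `E_{a,b}` with `x ↦ [x,a]`, `y ↦ [y,b]`. -/
def Eder (a b : Ass2) : Ass2 → Ass2 := der ⁅Xg, a⁆ ⁅Yg, b⁆

end


/-!
The commutator of two derivations of `ℚ⟨x,y⟩` again satisfies the Leibniz rule, and a derivation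
is determined by its values on `x` and `y`; this gives the formula for `[D_{b,a}, D_{b',a'}]`, and
shows that it kills `[x,y]` when both factors do. Derivations with values in `lie_C` preserve
`lie_C`, since they satisfy the Leibniz rule for brackets and send each generator `C_i` into `lie_C`.

Every `b` with a partner is push-invariant, hence so is `b″`. Read coefficientwise,
`D_{b,a}[x,y] = b y + x a - a x - y b = 0` ties the coefficients of `b` and `a` at the words `c u d`
(`c, d ∈ {x, y}`); moving the trailing `x`'s of a word through `a` one letter at a time then shows
that `b` has the same coefficient at `v y x^k` and at `x^k y v = push(v y x^k)`.
-/

open MonoidAlgebra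

lemma mono_nil : mono [] = 1 := rfl

lemma mono_append (w v : List (Fin 2)) : mono (w ++ v) = mono w * mono v := by
  simp [mono, single_mul_single, FreeMonoid.ofList_append]

lemma mono_cons (a : Fin 2) (w : List (Fin 2)) : mono (a :: w) = mono [a] * mono w :=
  mono_append [a] w

lemma of_eq_mono (m : FreeMonoid (Fin 2)) : of ℚ _ m = mono m.toList := rfl

section Derivation

variable (vx vy : Ass2)

noncomputable def derLin : Ass2 →ₗ[ℚ] Ass2 :=
  Finsupp.lsum ℚ (fun w => LinearMap.toSpanSingleton ℚ Ass2 (derFun vx vy w.toList))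
    ∘ₗ (coeffLinearEquiv ℚ).toLinearMap

lemma derLin_apply (f : Ass2) : derLin vx vy f = der vx vy f := rfl

lemma der_zero : der vx vy 0 = 0 :=
  map_zero (derLin vx vy)

lemma der_add (f g : Ass2) : der vx vy (f + g) = der vx vy f + der vx vy g :=
  map_add (derLin vx vy) f g

lemma der_sub (f g : Ass2) : der vx vy (f - g) = der vx vy f - der vx vy g :=
  map_sub (derLin vx vy) f g

lemma der_smul (r : ℚ) (f : Ass2) : der vx vy (r • f) = r • der vx vy f :=
  map_smul (derLin vx vy) r f

lemma der_mono (w : List (Fin 2)) : der vx vy (mono w) = derFun vx vy w := by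
  simp [der, mono, Finsupp.sum_single_index]

lemma der_mono_singleton (a : Fin 2) : der vx vy (mono [a]) = if a = 0 then vx else vy := by
  simp [der_mono, derFun, mono_nil]

lemma der_Xg : der vx vy Xg = vx := der_mono_singleton vx vy 0

lemma der_Yg : der vx vy Yg = vy := der_mono_singleton vx vy 1

lemma derFun_append (w v : List (Fin 2)) :
    derFun vx vy (w ++ v) = derFun vx vy w * mono v + mono w * derFun vx vy v := by
  induction w with
  | nil => simp [derFun, mono_nil]
  | cons a w ih =>
    simp only [List.cons_append, derFun, ih, mono_cons a w, mono_append]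
    noncomm_ring

lemma der_mul (f g : Ass2) : der vx vy (f * g) = der vx vy f * g + f * der vx vy g := by
  induction f using MonoidAlgebra.induction_on with
  | of m =>
    induction g using MonoidAlgebra.induction_on with
    | of m' =>
      rw [← map_mul, of_eq_mono, of_eq_mono, of_eq_mono, FreeMonoid.toList_mul, der_mono,
        der_mono, der_mono, derFun_append]
    | add p q hp hq => rw [mul_add, der_add, hp, hq, der_add]; noncomm_ring
    | smul r p hp =>
      rw [mul_smul_comm, der_smul, hp, der_smul, smul_add, mul_smul_comm, mul_smul_comm]
  | add p q hp hq => rw [add_mul, der_add, hp, hq, der_add]; noncomm_ring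
  | smul r p hp =>
    rw [smul_mul_assoc, der_smul, hp, der_smul, smul_add, smul_mul_assoc, smul_mul_assoc]

lemma der_lie (f g : Ass2) : der vx vy ⁅f, g⁆ = ⁅der vx vy f, g⁆ + ⁅f, der vx vy g⁆ := by
  simp only [Ring.lie_def, der_sub, der_mul]
  abel

lemma der_lie_Xg_Yg : der vx vy ⁅Xg, Yg⁆ = vx * Yg + Xg * vy - (vy * Xg + Yg * vx) := by
  rw [der_lie, der_Xg, der_Yg, Ring.lie_def, Ring.lie_def]
  abel

end Derivation

lemma eq_der_of_leibniz (D : Ass2 →ₗ[ℚ] Ass2) (hD : ∀ f g, D (f * g) = D f * g + f * D g)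
    (f : Ass2) : D f = der (D Xg) (D Yg) f := by
  suffices D = derLin (D Xg) (D Yg) from congr($this f)
  refine lhom_ext' fun m => LinearMap.ext_ring ?_
  change D (mono m.toList) = der _ _ (mono m.toList)
  induction m.toList with
  | nil =>
    have h1 : D 1 = 0 := by simpa using hD 1 1
    rw [der_mono, mono_nil, h1, derFun]
  | cons a w ih =>
    rw [der_mono, derFun, mono_cons, hD, ih, der_mono]
    congr 2
    fin_cases a <;> rfl

lemma der_commutator (b a b' a' f : Ass2) :
    der b a (der b' a' f) - der b' a' (der b a f)
      = der (der b a b' - der b' a' b) (der b a a' - der b' a' a) f := by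
  let D := derLin b a ∘ₗ derLin b' a' - derLin b' a' ∘ₗ derLin b a
  have hD : ∀ f g, D (f * g) = D f * g + f * D g := fun f g => by
    simp only [D, LinearMap.sub_apply, LinearMap.comp_apply, derLin_apply, der_mul, der_add]
    noncomm_ring
  simpa [D, derLin_apply, der_Xg, der_Yg] using eq_der_of_leibniz D hD f

lemma LieSubalgebra.mem_lieSpan_of_leibniz {R L : Type*} [CommRing R] [LieRing L]
    [LieAlgebra R L] {s : Set L} (D : L →ₗ[R] L)
    (hD : ∀ x y, D ⁅x, y⁆ = ⁅D x, y⁆ + ⁅x, D y⁆) (hs : ∀ x ∈ s, D x ∈ lieSpan R L s)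
    {x : L} (hx : x ∈ lieSpan R L s) : D x ∈ lieSpan R L s := by
  induction hx using lieSpan_induction with
  | mem x hx => exact hs x hx
  | zero => simp
  | add x y _ _ hx hy => simpa using add_mem hx hy
  | smul r x _ hx => simpa using SMulMemClass.smul_mem r hx
  | lie x y hx' hy' hx hy => rw [hD]; exact add_mem (lie_mem _ hx hy') (lie_mem _ hx' hy)

lemma Cgen_mem_lieC (i : ℕ) : Cgen i ∈ lieC := LieSubalgebra.subset_lieSpan ⟨i, rfl⟩

lemma lie_Xg_mem_lieC {z : Ass2} (hz : z ∈ lieC) : ⁅Xg, z⁆ ∈ lieC := by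
  refine LieSubalgebra.mem_lieSpan_of_leibniz (LieModule.toEnd ℚ Ass2 Ass2 Xg)
    (fun x y => leibniz_lie Xg x y) ?_ hz
  rintro _ ⟨i, rfl⟩
  exact Cgen_mem_lieC (i + 1)

lemma der_mem_lieC {b a : Ass2} (hb : b ∈ lieC) (ha : a ∈ lieC) {z : Ass2} (hz : z ∈ lieC) :
    der b a z ∈ lieC := by
  refine LieSubalgebra.mem_lieSpan_of_leibniz (derLin b a) (der_lie b a) ?_ hz
  rintro _ ⟨i, rfl⟩
  change der b a (Cgen i) ∈ lieC
  induction i with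
  | zero => exact (der_Yg b a).symm ▸ ha
  | succ i ih =>
    change der b a ⁅Xg, Cgen i⁆ ∈ lieC
    rw [der_lie, der_Xg]
    exact add_mem (lieC.lie_mem hb (Cgen_mem_lieC i)) (lie_Xg_mem_lieC ih)

section PushWord

open List

lemma exists_eq_replicate_zero_append_one {w : List (Fin 2)} (h : 1 ∈ w) :
    ∃ k v, w = replicate k 0 ++ 1 :: v := by
  induction w with
  | nil => simp at h
  | cons a w ih =>
    by_cases ha : a = 1
    · exact ⟨0, w, by simp [ha]⟩
    · obtain ⟨k, v, rfl⟩ := ih (by simpa [Ne.symm ha] using h)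
      exact ⟨k + 1, v, by simp [replicate_succ, show a = 0 by omega]⟩

lemma exists_eq_append_one_replicate_zero {w : List (Fin 2)} (h : 1 ∈ w) :
    ∃ v k, w = v ++ 1 :: replicate k 0 := by
  obtain ⟨k, v, hw⟩ := exists_eq_replicate_zero_append_one (mem_reverse.mpr h)
  exact ⟨v.reverse, k, by simpa using congrArg reverse hw⟩

lemma pushWord_append_one_replicate_zero (v : List (Fin 2)) (k : ℕ) :
    pushWord (v ++ 1 :: replicate k 0) = replicate k 0 ++ 1 :: v := by
  have hrev : (v ++ 1 :: replicate k 0).reverse = replicate k 0 ++ 1 :: v.reverse := by simp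
  simp [pushWord, hrev]

def popWord (w : List (Fin 2)) : List (Fin 2) :=
  if 1 ∈ w then (w.dropWhile (· ≠ 1)).tail ++ 1 :: w.takeWhile (· ≠ 1) else w

lemma popWord_replicate_zero_append_one (k : ℕ) (v : List (Fin 2)) :
    popWord (replicate k 0 ++ 1 :: v) = v ++ 1 :: replicate k 0 := by
  simp [popWord]

lemma popWord_pushWord (w : List (Fin 2)) : popWord (pushWord w) = w := by
  by_cases h : 1 ∈ w
  · obtain ⟨v, k, rfl⟩ := exists_eq_append_one_replicate_zero h
    rw [pushWord_append_one_replicate_zero, popWord_replicate_zero_append_one]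
  · simp [pushWord, popWord, h]

lemma pushWord_popWord (w : List (Fin 2)) : pushWord (popWord w) = w := by
  by_cases h : 1 ∈ w
  · obtain ⟨k, v, rfl⟩ := exists_eq_replicate_zero_append_one h
    rw [popWord_replicate_zero_append_one, pushWord_append_one_replicate_zero]
  · simp [pushWord, popWord, h]

def pushEquiv : List (Fin 2) ≃ List (Fin 2) :=
  ⟨pushWord, popWord, popWord_pushWord, pushWord_popWord⟩

end PushWord

lemma Finsupp.mapDomain_equiv_eq_self {α M : Type*} [AddCommMonoid M] (e : α ≃ α) (f : α →₀ M)
    (h : ∀ a, f (e a) = f a) : mapDomain e f = f := by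
  ext a
  simpa using (h (e.symm a)).symm

lemma pushA_eq_self (f : Ass2) (h : ∀ w, coeffW f (pushWord w) = coeffW f w) : pushA f = f := by
  have hpush : (fun w => FreeMonoid.ofList (pushWord w.toList))
      = ⇑(FreeMonoid.toList.trans (pushEquiv.trans FreeMonoid.ofList)) := rfl
  rw [pushA, hpush, Finsupp.mapDomain_equiv_eq_self _ _ fun w => h w.toList]

section Partner

lemma coeffW_add (f g : Ass2) (w : List (Fin 2)) : coeffW (f + g) w = coeffW f w + coeffW g w :=
  rfl

lemma coeffW_mul_mono_singleton (f : Ass2) (c d : Fin 2) (u : List (Fin 2)) :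
    coeffW (f * mono [c]) (u ++ [d]) = if d = c then coeffW f u else 0 := by
  split_ifs with hdc
  · subst hdc
    refine (coeff_mul_single_eq_coeff_mul _ fun m _ => ?_).trans (mul_one _)
    rw [← FreeMonoid.toList.injective.eq_iff]
    simpa [FreeMonoid.toList_mul] using FreeMonoid.toList.eq_symm_apply.symm
  · refine coeff_mul_single_of_forall_mul_ne _ _ fun m hm => hdc ?_
    simpa [FreeMonoid.toList_mul] using (congrArg (·.toList.getLast?) hm).symm

lemma coeffW_mono_singleton_mul (f : Ass2) (c d : Fin 2) (u : List (Fin 2)) :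
    coeffW (mono [c] * f) (d :: u) = if d = c then coeffW f u else 0 := by
  split_ifs with hdc
  · subst hdc
    refine (coeff_single_mul_eq_mul_coeff _ fun m _ => ?_).trans (one_mul _)
    rw [← FreeMonoid.toList.injective.eq_iff]
    simpa [FreeMonoid.toList_mul] using FreeMonoid.toList.eq_symm_apply.symm
  · refine coeff_single_mul_of_forall_mul_ne _ _ fun m hm => hdc ?_
    simpa [FreeMonoid.toList_mul] using (congrArg (·.toList.head?) hm).symm

variable {b a : Ass2}

-- the coefficient of the word `c u d` in `b y + x a = a x + y b`
lemma coeffW_partner (h : der b a ⁅Xg, Yg⁆ = 0) (c d : Fin 2) (u : List (Fin 2)) :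
    (if d = 1 then coeffW b (c :: u) else 0) + (if c = 0 then coeffW a (u ++ [d]) else 0)
      = (if d = 0 then coeffW a (c :: u) else 0) + (if c = 1 then coeffW b (u ++ [d]) else 0) := by
  rw [der_lie_Xg_Yg, sub_eq_zero] at h
  have hw := congrArg (coeffW · (c :: u ++ [d])) h
  simp only [coeffW_add] at hw
  rwa [Xg, Yg, coeffW_mul_mono_singleton, coeffW_mul_mono_singleton, List.cons_append,
    coeffW_mono_singleton_mul, coeffW_mono_singleton_mul] at hw

lemma coeffW_partner_append_zero (h : der b a ⁅Xg, Yg⁆ = 0) (u : List (Fin 2)) :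
    coeffW a (u ++ [0]) = coeffW a (0 :: u) := by
  simpa using coeffW_partner h 0 0 u

lemma coeffW_append_zero (h : der b a ⁅Xg, Yg⁆ = 0) (u : List (Fin 2)) :
    coeffW b (u ++ [0]) = -coeffW a (1 :: u) := by
  simpa [eq_neg_iff_add_eq_zero, add_comm] using (coeffW_partner h 1 0 u).symm

lemma coeffW_partner_append_one (h : der b a ⁅Xg, Yg⁆ = 0) (u : List (Fin 2)) :
    coeffW a (u ++ [1]) = -coeffW b (0 :: u) := by
  simpa [eq_neg_iff_add_eq_zero, add_comm] using coeffW_partner h 0 1 u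

lemma coeffW_append_one (h : der b a ⁅Xg, Yg⁆ = 0) (u : List (Fin 2)) :
    coeffW b (u ++ [1]) = coeffW b (1 :: u) := by
  simpa using (coeffW_partner h 1 1 u).symm

lemma coeffW_partner_append_replicate_zero (h : der b a ⁅Xg, Yg⁆ = 0) (k : ℕ)
    (s : List (Fin 2)) :
    coeffW a (s ++ List.replicate k 0) = coeffW a (List.replicate k 0 ++ s) := by
  induction k generalizing s with
  | zero => simp
  | succ k ih =>
    calc coeffW a (s ++ List.replicate (k + 1) 0)
        _ = coeffW a (List.replicate k 0 ++ s ++ [0]) := by simp [List.replicate_succ, ← ih]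
        _ = coeffW a (List.replicate (k + 1) 0 ++ s) := coeffW_partner_append_zero h _

lemma coeffW_append_one_replicate_zero (h : der b a ⁅Xg, Yg⁆ = 0) (k : ℕ) (v : List (Fin 2)) :
    coeffW b (v ++ 1 :: List.replicate k 0) = coeffW b (List.replicate k 0 ++ 1 :: v) := by
  cases k with
  | zero => simpa using coeffW_append_one h v
  | succ k =>
    calc coeffW b (v ++ 1 :: List.replicate (k + 1) 0)
        _ = coeffW b (v ++ 1 :: List.replicate k 0 ++ [0]) := by simp [List.replicate_succ']
        _ = -coeffW a ((1 :: v ++ [1]) ++ List.replicate k 0) := by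
          rw [coeffW_append_zero h]; simp
        _ = -coeffW a ((List.replicate k 0 ++ 1 :: v) ++ [1]) := by
          rw [coeffW_partner_append_replicate_zero h]; simp
        _ = coeffW b (List.replicate (k + 1) 0 ++ 1 :: v) := by
          rw [coeffW_partner_append_one h, neg_neg]; rfl

lemma pushA_eq_self_of_der_lie_Xg_Yg_eq_zero (h : der b a ⁅Xg, Yg⁆ = 0) : pushA b = b := by
  refine pushA_eq_self b fun w => ?_
  by_cases h1 : 1 ∈ w
  · obtain ⟨v, k, rfl⟩ := exists_eq_append_one_replicate_zero h1
    rw [pushWord_append_one_replicate_zero, coeffW_append_one_replicate_zero h]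
  · simp [pushWord, h1]

end Partner

theorem pushInvariant_lie_algebra_general (b b' a a' : Ass2)
    (hb : b ∈ lieC) (hb' : b' ∈ lieC) (ha : a ∈ lieC) (ha' : a' ∈ lieC)
    (hD : der b a ⁅Xg, Yg⁆ = 0) (hD' : der b' a' ⁅Xg, Yg⁆ = 0) :
    (∀ f : Ass2, der b a (der b' a' f) - der b' a' (der b a f)
        = der (der b a b' - der b' a' b) (der b a a' - der b' a' a) f) ∧
    der (der b a b' - der b' a' b) (der b a a' - der b' a' a) ⁅Xg, Yg⁆ = 0 ∧
    (der b a b' - der b' a' b) ∈ lieC ∧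
    pushA (der b a b' - der b' a' b) = der b a b' - der b' a' b ∧
    (der b a a' - der b' a' a) ∈ lieC := by
  have hcomm := der_commutator b a b' a'
  have hD'' : der (der b a b' - der b' a' b) (der b a a' - der b' a' a) ⁅Xg, Yg⁆ = 0 := by
    rw [← hcomm, hD, hD', der_zero, der_zero, sub_zero]
  exact ⟨hcomm, hD'', sub_mem (der_mem_lieC hb ha hb') (der_mem_lieC hb' ha' hb),
    pushA_eq_self_of_der_lie_Xg_Yg_eq_zero hD'',
    sub_mem (der_mem_lieC hb ha ha') (der_mem_lieC hb' ha' ha)⟩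

/-- **Statement 9** (Corollary 14 of the paper).  If `b, b′ ∈ lie_C` are push-invariant with
partners `a, a′` (so `D_{b,a}` and `D_{b′,a′}` annihilate `[x,y]`), then the commutator
`[D_{b,a}, D_{b′,a′}]` equals `D_{b″,a″}` with `b″ = D_{b,a}(b′) − D_{b′,a′}(b)` and
`a″ = D_{b,a}(a′) − D_{b′,a′}(a)`, and it annihilates `[x,y]`; in particular
`⟨b,b′⟩ = b″` is again a push-invariant element of `lie_C` with partner `a″`.  Hence the
push-invariant elements of `lie_C` form a Lie algebra under `⟨·,·⟩`, isomorphic to `oder_2`. -/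
theorem pushInvariant_lie_algebra (b b' a a' : Ass2)
    (hb : b ∈ lieC) (hb' : b' ∈ lieC) (ha : a ∈ lieC) (ha' : a' ∈ lieC)
    (hpb : pushA b = b) (hpb' : pushA b' = b')
    (hD : der b a ⁅Xg, Yg⁆ = 0) (hD' : der b' a' ⁅Xg, Yg⁆ = 0) :
    (∀ f : Ass2, der b a (der b' a' f) - der b' a' (der b a f)
        = der (der b a b' - der b' a' b) (der b a a' - der b' a' a) f) ∧
    der (der b a b' - der b' a' b) (der b a a' - der b' a' a) ⁅Xg, Yg⁆ = 0 ∧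
    (der b a b' - der b' a' b) ∈ lieC ∧
    pushA (der b a b' - der b' a' b) = der b a b' - der b' a' b ∧
    (der b a a' - der b' a' a) ∈ lieC :=
  pushInvariant_lie_algebra_general b b' a a' hb hb' ha ha' hD hD'
end

section
/- Work in ℚ[v_1,…,v_r] with r ≥ 2, and set v_0 := v_r. For a subset B ⊆ {1,…,r} let P^d_B denote the sum of all monomials of degree d in the variables {v_j : j ∈ B} (with P^0_B = 1 and P^d_B = 0 for d < 0). Then for all 1 ≤ i ≤ r−1 and all n ≥ 1: Σ_{∅ ≠ B ⊆ {1,…,i}} (−1)^{|B|−1} (∏_{j ∈ B} (v_{j−1} − v_j)) · P^{n−|B|}_B = (v_r − v_i) · v_i^{n−1}. -/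
noncomputable section

open MvPolynomial

/-- the variables `v_1, …, v_r` (for `1 ≤ j ≤ r`), with the convention `v_0 = v_r`. -/
def vv (r j : ℕ) : MP r :=
  if h : 0 < r then
    (if j = 0 then X ⟨r - 1, Nat.sub_lt h one_pos⟩
     else X ⟨(j - 1) % r, Nat.mod_lt _ h⟩)
  else 0

/-- `P^d_B` : the sum of all monomials of degree `d` in the variables `{v_j : j ∈ B}`,
with `P^0_B = 1` and `P^d_B = 0` for `d < 0`. -/
def PZ (r : ℕ) (d : ℤ) (B : Finset ℕ) : MP r :=
  if d < 0 then 0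
  else ∑ s ∈ Finset.sym B d.toNat, ((s : Multiset ℕ).map (vv r)).prod


/-!
With `g_a = 1 / (1 - a t)`, the generating series of `P^d_B` in `d` is `∏_{j ∈ B} g_{v_j}`, so
the generating series of the left-hand side is, by expanding a product over `{1, …, i}`,
`1 - ∏_{j=1}^{i} (1 - (v_{j-1} - v_j) t g_{v_j}) = 1 - ∏_{j=1}^{i} (1 - v_{j-1} t) g_{v_j}`.
The product telescopes to `(1 - v_0 t) g_{v_i}`, whose coefficients are read off directly.
-/

open Finset PowerSeries

section

variable {R : Type*} [CommRing R]

lemma Finset.sum_sym_insert_prod_map {α : Type*} [DecidableEq α] (x : α → R) {a : α}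
    {B : Finset α} (ha : a ∉ B) (n : ℕ) :
    ∑ s ∈ (insert a B).sym n, ((s : Multiset α).map x).prod =
      ∑ i ∈ range (n + 1), x a ^ i * ∑ s ∈ B.sym (n - i), ((s : Multiset α).map x).prod := by
  rw [← sum_coe_sort, sum_range, Fintype.sum_equiv (symInsertEquiv ha) _
    (fun p => x a ^ (p.1 : ℕ) * ((p.2.1 : Multiset α).map x).prod)]
  · simp only [mul_sum, ← univ_sigma_univ, sum_sigma, ← sum_coe_sort (B.sym _)]
  · intro s
    conv_lhs => rw [← (symInsertEquiv ha).symm_apply_apply s]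
    simp only [symInsertEquiv_symm_apply_coe, Sym.coe_fill, Multiset.map_add, Multiset.prod_add,
      Sym.coe_replicate, Multiset.map_replicate, Multiset.prod_replicate, mul_comm]

namespace PowerSeries

def geomSeries (a : R) : R⟦X⟧ := mk (a ^ ·)

@[simp]
lemma coeff_geomSeries (a : R) (n : ℕ) : coeff n (geomSeries a) = a ^ n :=
  coeff_mk _ _

lemma geomSeries_mul_one_sub (a : R) : geomSeries a * (1 - C a * X) = 1 := by
  have h : rescale a (mk 1) = geomSeries a := by ext; simp
  simpa [h, rescale_X] using congrArg (rescale a) (mk_one_mul_one_sub_eq_one R)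

lemma one_sub_mul_geomSeries (a b : R) :
    (1 - C b * X) * geomSeries a = 1 - C (b - a) * X * geomSeries a := by
  rw [map_sub]
  linear_combination geomSeries_mul_one_sub a

lemma coeff_succ_one_sub_mul_geomSeries (a b : R) (n : ℕ) :
    coeff (n + 1) ((1 - C b * X) * geomSeries a) = (a - b) * a ^ n := by
  simp only [sub_mul, one_mul, mul_assoc, map_sub, coeff_geomSeries, pow_succ, coeff_C_mul,
    coeff_succ_X_mul]
  ring

lemma coeff_prod_geomSeries {α : Type*} [DecidableEq α] (x : α → R) (B : Finset α) (d : ℕ) :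
    coeff d (∏ j ∈ B, geomSeries (x j)) = ∑ s ∈ B.sym d, ((s : Multiset α).map x).prod := by
  induction B using Finset.induction_on generalizing d with
  | empty => cases d <;> simp [Sym.eq_nil_of_card_zero, coeff_one]
  | insert a B ha ih =>
    rw [prod_insert ha, coeff_mul, sum_sym_insert_prod_map x ha,
      Nat.sum_antidiagonal_eq_sum_range_succ (fun i j => coeff i _ * coeff j _)]
    simp only [coeff_geomSeries, ih]

lemma prod_Icc_one_sub_mul_geomSeries (x : ℕ → R) (i : ℕ) :
    ∏ j ∈ Icc 1 i, ((1 - C (x (j - 1)) * X) * geomSeries (x j)) =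
      (1 - C (x 0) * X) * geomSeries (x i) := by
  induction i with
  | zero => simpa [mul_comm] using (geomSeries_mul_one_sub (x 0)).symm
  | succ i ih =>
    rw [prod_Icc_succ_top (by omega), ih, Nat.add_sub_cancel]
    linear_combination ((1 - C (x 0) * X) * geomSeries (x (i + 1))) * geomSeries_mul_one_sub (x i)

lemma sum_powerset_Icc_alternating (x : ℕ → R) (i : ℕ) :
    ∑ B ∈ (Icc 1 i).powerset.filter (· ≠ ∅),
      C ((-1) ^ (B.card - 1) * ∏ j ∈ B, (x (j - 1) - x j)) * X ^ B.card *
        ∏ j ∈ B, geomSeries (x j) =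
      1 - (1 - C (x 0) * X) * geomSeries (x i) := by
  have hprod := prod_one_add (f := fun j => -(C (x (j - 1) - x j) * X * geomSeries (x j)))
    (Icc 1 i)
  simp only [← sub_eq_add_neg, ← one_sub_mul_geomSeries, prod_Icc_one_sub_mul_geomSeries] at hprod
  rw [hprod, filter_ne', ← add_sum_erase _ _ (empty_mem_powerset _), prod_empty,
    sub_add_cancel_left, ← sum_neg_distrib]
  refine sum_congr rfl fun B hB => ?_
  obtain ⟨k, hk⟩ : ∃ k, B.card = k + 1 :=
    Nat.exists_eq_add_one.mpr (card_pos.mpr (nonempty_iff_ne_empty.mpr (ne_of_mem_erase hB)))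
  simp only [prod_neg, prod_mul_distrib, prod_const, map_mul, map_pow, map_neg, map_one, map_prod,
    hk, add_tsub_cancel_right]
  ring

end PowerSeries

end

lemma vv_zero (r : ℕ) : vv r 0 = vv r r := by
  unfold vv
  rcases Nat.eq_zero_or_pos r with h | h
  · simp [h]
  · simp [h, h.ne', Nat.mod_eq_of_lt (Nat.sub_lt h one_pos)]

lemma PZ_natCast_sub (r n k : ℕ) (B : Finset ℕ) :
    PZ r ((n : ℤ) - k) B =
      if k ≤ n then PowerSeries.coeff (n - k) (∏ j ∈ B, geomSeries (vv r j)) else 0 := by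
  rw [PZ, coeff_prod_geomSeries]
  split_ifs with h₁ h₂ h₂
  · omega
  · rfl
  · rw [show ((n : ℤ) - k).toNat = n - k by omega]
  · omega

theorem complete_homogeneous_alternating_identity_general (r : ℕ)
    (i n : ℕ) (hn : 1 ≤ n) :
    ∑ B ∈ (Finset.Icc 1 i).powerset.filter (· ≠ ∅),
      ((-1 : MP r)) ^ (B.card - 1) * (∏ j ∈ B, (vv r (j - 1) - vv r j)) *
        PZ r ((n : ℤ) - B.card) B
      = (vv r r - vv r i) * (vv r i) ^ (n - 1) := by
  obtain ⟨m, rfl⟩ : ∃ m, n = m + 1 := ⟨n - 1, by omega⟩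
  rw [← vv_zero]
  calc _ = ∑ B ∈ (Icc 1 i).powerset.filter (· ≠ ∅), PowerSeries.coeff (m + 1)
        (PowerSeries.C ((-1) ^ (B.card - 1) * ∏ j ∈ B, (vv r (j - 1) - vv r j)) *
          PowerSeries.X ^ B.card * ∏ j ∈ B, geomSeries (vv r j)) := by
        refine sum_congr rfl fun B _ => ?_
        rw [PZ_natCast_sub, mul_assoc (PowerSeries.C _), PowerSeries.coeff_C_mul, coeff_X_pow_mul']
    _ = _ := by
      rw [← map_sum, sum_powerset_Icc_alternating, map_sub, coeff_succ_one_sub_mul_geomSeries,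
        PowerSeries.coeff_one, if_neg m.succ_ne_zero, Nat.add_sub_cancel]
      ring

/-- **Statement 18** (equation (70), Claim 2 in Appendix 2 of the paper).  In
`ℚ[v_1,…,v_r]` with `r ≥ 2` and `v_0 = v_r`, for all `1 ≤ i ≤ r−1` and `n ≥ 1`:
`Σ_{∅ ≠ B ⊆ {1,…,i}} (−1)^{|B|−1} (∏_{j∈B}(v_{j−1}−v_j)) · P^{n−|B|}_B
  = (v_r − v_i)·v_i^{n−1}`. -/
theorem complete_homogeneous_alternating_identity (r : ℕ) (hr : 2 ≤ r)
    (i n : ℕ) (hi1 : 1 ≤ i) (hir : i ≤ r - 1) (hn : 1 ≤ n) :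
    ∑ B ∈ (Finset.Icc 1 i).powerset.filter (· ≠ ∅),
      ((-1 : MP r)) ^ (B.card - 1) * (∏ j ∈ B, (vv r (j - 1) - vv r j)) *
        PZ r ((n : ℤ) - B.card) B
      = (vv r r - vv r i) * (vv r i) ^ (n - 1) :=
  complete_homogeneous_alternating_identity_general r i n hn
end
end
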